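/- arXiv:2507.16301 — 2 statements merged into one kernel-verified Lean document; each statement's English description precedes it below -/
import Mathlib

section
/- Let G be a connected simple graph of order n ≥ 4 and let C(G) be its central graph, with V1 the set of original vertices and V2 the set of subdivided vertices. Then every automorphism φ of C(G) satisfies φ(V1) = V1 and φ(V2) = V2. -/
open SimpleGraph

/-- The subdivision graph `S(G)`: each edge `{u,v}` of `G` is replaced by a new
vertex (the element of `G.edgeSet`) adjacent to both `u` and `v`. -/
def subdivisionGraph {V : Type*} (G : SimpleGraph V) : SimpleGraph (V ⊕ G.edgeSet) where
  Adj x y :=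
    match x, y with
    | Sum.inl u, Sum.inr e => u ∈ (e : Sym2 V)
    | Sum.inr e, Sum.inl u => u ∈ (e : Sym2 V)
    | _, _ => False
  symm := ⟨by rintro (u | e) (v | f) h <;> simp_all⟩
  loopless := ⟨by rintro (u | e) h <;> simp_all⟩

/-- The central graph `C(G)`: obtained from the subdivision graph `S(G)` by joining
every pair of distinct vertices of `G` that are non-adjacent in `G`. -/
def centralGraph {V : Type*} (G : SimpleGraph V) : SimpleGraph (V ⊕ G.edgeSet) where
  Adj x y :=
    match x, y with
    | Sum.inl u, Sum.inl v => u ≠ v ∧ ¬ G.Adj u v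
    | Sum.inl u, Sum.inr e => u ∈ (e : Sym2 V)
    | Sum.inr e, Sum.inl u => u ∈ (e : Sym2 V)
    | Sum.inr _, Sum.inr _ => False
  symm := by
    constructor
    rintro (u | e) (v | f) h
    · exact ⟨h.1.symm, fun a => h.2 a.symm⟩
    · exact h
    · exact h
    · exact h
  loopless := by
    constructor
    rintro (u | e) h
    · exact h.1 rfl
    · exact h

/-- The middle graph `M(G)`: obtained from the subdivision graph `S(G)` by joining
each pair of distinct subdivided vertices corresponding to adjacent edges of `G`. -/
def middleGraph {V : Type*} (G : SimpleGraph V) : SimpleGraph (V ⊕ G.edgeSet) where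
  Adj x y :=
    match x, y with
    | Sum.inl u, Sum.inr e => u ∈ (e : Sym2 V)
    | Sum.inr e, Sum.inl u => u ∈ (e : Sym2 V)
    | Sum.inr e, Sum.inr f => e ≠ f ∧ ∃ u, u ∈ (e : Sym2 V) ∧ u ∈ (f : Sym2 V)
    | Sum.inl _, Sum.inl _ => False
  symm := by
    constructor
    rintro (u | e) (v | f) h
    · exact h
    · exact h
    · exact h
    · exact ⟨h.1.symm, h.2.imp fun u hu => ⟨hu.2, hu.1⟩⟩
  loopless := by
    constructor
    rintro (u | e) h
    · exact h
    · exact h.1 rfl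

/-- The line graph `L(G)`: vertices are the edges of `G`, two distinct edges being
adjacent when they share an endpoint. -/
def lineG {V : Type*} (G : SimpleGraph V) : SimpleGraph G.edgeSet where
  Adj e f := e ≠ f ∧ ∃ u, u ∈ (e : Sym2 V) ∧ u ∈ (f : Sym2 V)
  symm := ⟨fun e f h => ⟨h.1.symm, h.2.imp fun u hu => ⟨hu.2, hu.1⟩⟩⟩
  loopless := ⟨fun e h => h.1 rfl⟩

/-- The endline graph `G⁺`: to each vertex `v` of `G` we attach a new pendant
vertex; `Sum.inl` is the copy of `V(G)` and `Sum.inr` are the new vertices. -/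
def endlineGraph {V : Type*} (G : SimpleGraph V) : SimpleGraph (V ⊕ V) where
  Adj x y :=
    match x, y with
    | Sum.inl u, Sum.inl v => G.Adj u v
    | Sum.inl u, Sum.inr v => u = v
    | Sum.inr u, Sum.inl v => u = v
    | Sum.inr _, Sum.inr _ => False
  symm := by
    constructor
    rintro (u | u) (v | v) h
    · exact h.symm
    · exact h.symm
    · exact h.symm
    · exact h
  loopless := by
    constructor
    rintro (u | u) h
    · exact G.irrefl h
    · exact h

/-- The join `G₁ + G₂` of two vertex-disjoint graphs: their disjoint union together
with all edges between the two vertex sets. -/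
def joinGraph {V₁ V₂ : Type*} (G₁ : SimpleGraph V₁) (G₂ : SimpleGraph V₂) :
    SimpleGraph (V₁ ⊕ V₂) where
  Adj x y :=
    match x, y with
    | Sum.inl u, Sum.inl v => G₁.Adj u v
    | Sum.inr u, Sum.inr v => G₂.Adj u v
    | Sum.inl _, Sum.inr _ => True
    | Sum.inr _, Sum.inl _ => True
  symm := by
    constructor
    rintro (u | u) (v | v) h
    · exact h.symm
    · trivial
    · trivial
    · exact h.symm
  loopless := by
    constructor
    rintro (u | u) h
    · exact G₁.irrefl h
    · exact G₂.irrefl h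

/-- The maximum degree `Δ(H)` of a graph (as a supremum of cardinalities of
neighborhoods, which agrees with the usual maximum degree for finite graphs). -/
noncomputable def maxDeg {W : Type*} (H : SimpleGraph W) : ℕ :=
  sSup {k | ∃ v : W, k = (H.neighborSet v).ncard}

/-- A graph is regular if all vertices have the same degree. -/
def IsRegularGraph {W : Type*} (H : SimpleGraph W) : Prop :=
  ∀ u v : W, (H.neighborSet u).ncard = (H.neighborSet v).ncard

/-- The distinguishing number `D(H)`: the least `d` such that `H` admits a vertex
coloring with `d` colors preserved only by the identity automorphism. -/
noncomputable def distinguishingNumber {W : Type*} (H : SimpleGraph W) : ℕ :=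
  sInf {d | ∃ c : W → Fin d, ∀ φ : H ≃g H, (∀ v, c (φ v) = c v) → ∀ v, φ v = v}

/-- The distinguishing index `D'(H)`: the least `d` such that `H` admits an edge
coloring with `d` colors preserved only by the identity automorphism. -/
noncomputable def distinguishingIndex {W : Type*} (H : SimpleGraph W) : ℕ :=
  sInf {d | ∃ c : H.edgeSet → Fin d,
    ∀ φ : H ≃g H, (∀ e, c (φ.mapEdgeSet e) = c e) → ∀ v, φ v = v}

/-- A proper total coloring of `H` with `d` colors: adjacent vertices, adjacent
edges, and incident vertex/edge pairs receive distinct colors. -/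
def IsProperTotalColoring {W : Type*} (H : SimpleGraph W) {d : ℕ}
    (f : W ⊕ H.edgeSet → Fin d) : Prop :=
  (∀ u v : W, H.Adj u v → f (Sum.inl u) ≠ f (Sum.inl v)) ∧
  (∀ e e' : H.edgeSet, e ≠ e' → (∃ u, u ∈ (e : Sym2 W) ∧ u ∈ (e' : Sym2 W)) →
    f (Sum.inr e) ≠ f (Sum.inr e')) ∧
  (∀ (v : W) (e : H.edgeSet), v ∈ (e : Sym2 W) → f (Sum.inl v) ≠ f (Sum.inr e))

/-- An automorphism `φ` preserves a total coloring `f`. -/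
def PreservesTotalColoring {W : Type*} (H : SimpleGraph W) {d : ℕ}
    (f : W ⊕ H.edgeSet → Fin d) (φ : H ≃g H) : Prop :=
  (∀ v : W, f (Sum.inl (φ v)) = f (Sum.inl v)) ∧
  (∀ e : H.edgeSet, f (Sum.inr (φ.mapEdgeSet e)) = f (Sum.inr e))

/-- The total chromatic number `χ''(H)`. -/
noncomputable def totalChromaticNumber {W : Type*} (H : SimpleGraph W) : ℕ :=
  sInf {d | ∃ f : W ⊕ H.edgeSet → Fin d, IsProperTotalColoring H f}

/-- The total distinguishing chromatic number `χ''_D(H)`: the least `d` such that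
`H` has a proper total coloring with `d` colors preserved only by the identity. -/
noncomputable def totalDistinguishingChromaticNumber {W : Type*} (H : SimpleGraph W) : ℕ :=
  sInf {d | ∃ f : W ⊕ H.edgeSet → Fin d, IsProperTotalColoring H f ∧
    ∀ φ : H ≃g H, PreservesTotalColoring H f φ → ∀ v, φ v = v}

/-- The color class `C_H(u)` of a vertex under a total coloring: the color of `u`
together with the colors of the edges incident to `u`. -/
def totalColorClass {W : Type*} (H : SimpleGraph W) {d : ℕ}
    (f : W ⊕ H.edgeSet → Fin d) (u : W) : Set (Fin d) :=
  {f (Sum.inl u)} ∪ {x | ∃ e : H.edgeSet, u ∈ (e : Sym2 W) ∧ x = f (Sum.inr e)}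

/-- An AVD-total coloring: a proper total coloring in which adjacent vertices have
distinct color classes. -/
def IsAVDTotalColoring {W : Type*} (H : SimpleGraph W) {d : ℕ}
    (f : W ⊕ H.edgeSet → Fin d) : Prop :=
  IsProperTotalColoring H f ∧
  ∀ u v : W, H.Adj u v → totalColorClass H f u ≠ totalColorClass H f v

/-- The AVD-total chromatic number `χ''ₐ(H)`. -/
noncomputable def avdTotalChromaticNumber {W : Type*} (H : SimpleGraph W) : ℕ :=
  sInf {d | ∃ f : W ⊕ H.edgeSet → Fin d, IsAVDTotalColoring H f}

/-- A total dominator coloring: a proper vertex coloring such that every vertex is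
adjacent to every vertex of some (nonempty) color class. -/
def IsTotalDominatorColoring {W : Type*} (H : SimpleGraph W) {d : ℕ}
    (c : W → Fin d) : Prop :=
  (∀ u v : W, H.Adj u v → c u ≠ c v) ∧
  (∀ v : W, ∃ i : Fin d, (∃ w, c w = i) ∧ ∀ w, c w = i → H.Adj v w)

/-- The total dominator chromatic number `χᵗ_d(H)`. -/
noncomputable def tdChromaticNumber {W : Type*} (H : SimpleGraph W) : ℕ :=
  sInf {d | ∃ c : W → Fin d, IsTotalDominatorColoring H c}

/-! Degrees separate the two vertex classes of `C(G)`: an original vertex `u` is adjacent, for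
every other vertex `v`, either to `v` itself (if `uv ∉ E(G)`) or to the subdivision vertex of `uv`
(if `uv ∈ E(G)`), so it has degree `n - 1 ≥ 3`, whereas a subdivision vertex has degree `2`. -/

theorem SimpleGraph.Embedding.ncard_neighborSet_le {V W : Type*} [Finite W]
    {G : SimpleGraph V} {G' : SimpleGraph W} (f : G ↪g G') (v : V) :
    (G.neighborSet v).ncard ≤ (G'.neighborSet (f v)).ncard :=
  Set.ncard_le_ncard_of_injOn f (fun _ => (f.apply_mem_neighborSet_iff).2) f.injective.injOn

namespace centralGraph

variable {V : Type*} (G : SimpleGraph V)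

theorem ncard_neighborSet_inr_le_two (e : G.edgeSet) :
    ((centralGraph G).neighborSet (Sum.inr e)).ncard ≤ 2 := by
  obtain ⟨e, he⟩ := e
  induction e using Sym2.ind with
  | _ x y =>
    have hsub :
        (centralGraph G).neighborSet (Sum.inr ⟨s(x, y), he⟩) ⊆ {Sum.inl x, Sum.inl y} := by
      rintro (w | f) hw
      · simpa [centralGraph] using hw
      · exact hw.elim
    calc _ ≤ ({Sum.inl x, Sum.inl y} : Set (V ⊕ G.edgeSet)).ncard := Set.ncard_le_ncard hsub
      _ ≤ ({Sum.inl y} : Set (V ⊕ G.edgeSet)).ncard + 1 := Set.ncard_insert_le _ _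
      _ = 2 := by rw [Set.ncard_singleton]

theorem card_le_ncard_neighborSet_inl_add_one [Fintype V] (u : V) :
    Fintype.card V ≤ ((centralGraph G).neighborSet (Sum.inl u)).ncard + 1 := by
  classical
  let f : V → V ⊕ G.edgeSet := fun v =>
    if h : G.Adj u v then Sum.inr ⟨s(u, v), h⟩ else Sum.inl v
  have hmaps :
      ∀ v ∈ (Set.univ \ {u} : Set V), f v ∈ (centralGraph G).neighborSet (Sum.inl u) := by
    intro v hv
    by_cases h : G.Adj u v
    · simp [f, h, centralGraph]
    · simpa [f, h, centralGraph, eq_comm] using hv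
  have hinj : Function.Injective f := by
    intro v w hvw
    by_cases h₁ : G.Adj u v <;> by_cases h₂ : G.Adj u w <;>
      simp only [f, h₁, h₂, ↓reduceDIte, Sum.inr.injEq, Sum.inl.injEq, reduceCtorEq] at hvw
    · exact Sym2.congr_right.mp (congrArg Subtype.val hvw)
    · exact hvw
  calc Fintype.card V = (Set.univ \ {u} : Set V).ncard + 1 := by
        rw [Set.ncard_sdiff_singleton_add_one (Set.mem_univ u), Set.ncard_univ,
          Nat.card_eq_fintype_card]
    _ ≤ _ := by gcongr; exact Set.ncard_le_ncard_of_injOn f hmaps hinj.injOn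

variable {G} in
theorem exists_apply_inl_eq_inl [Fintype V] (hn : 4 ≤ Fintype.card V)
    (φ : centralGraph G ≃g centralGraph G) (u : V) : ∃ v, φ (Sum.inl u) = Sum.inl v := by
  rcases hφ : φ (Sum.inl u) with v | e
  · exact ⟨v, rfl⟩
  · have : Fintype.card V ≤ 3 := calc
      Fintype.card V ≤ ((centralGraph G).neighborSet (Sum.inl u)).ncard + 1 :=
        card_le_ncard_neighborSet_inl_add_one G u
      _ ≤ ((centralGraph G).neighborSet (φ (Sum.inl u))).ncard + 1 :=
        Nat.add_le_add_right (φ.toEmbedding.ncard_neighborSet_le _) 1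
      _ ≤ 2 + 1 := by
        rw [hφ]; exact Nat.add_le_add_right (ncard_neighborSet_inr_le_two G e) 1
    omega

end centralGraph

theorem stmt_1_general {V : Type*} [Fintype V] (G : SimpleGraph V)
    (hn : 4 ≤ Fintype.card V)
    (φ : centralGraph G ≃g centralGraph G) :
    (∀ u : V, ∃ v : V, φ (Sum.inl u) = Sum.inl v) ∧
    (∀ e : G.edgeSet, ∃ e' : G.edgeSet, φ (Sum.inr e) = Sum.inr e') := by
  refine ⟨centralGraph.exists_apply_inl_eq_inl hn φ, fun e => ?_⟩
  rcases hφ : φ (Sum.inr e) with v | e'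
  · obtain ⟨w, hw⟩ := centralGraph.exists_apply_inl_eq_inl hn φ.symm v
    rw [← hφ, φ.symm_apply_apply] at hw
    exact (Sum.inr_ne_inl hw).elim
  · exact ⟨e', rfl⟩

/-- For a connected graph `G` of order at least `4`, every
automorphism of `C(G)` maps original vertices to original vertices and
subdivided vertices to subdivided vertices. -/
theorem stmt_1 {V : Type*} [Fintype V] (G : SimpleGraph V)
    (hconn : G.Connected) (hn : 4 ≤ Fintype.card V)
    (φ : centralGraph G ≃g centralGraph G) :
    (∀ u : V, ∃ v : V, φ (Sum.inl u) = Sum.inl v) ∧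
    (∀ e : G.edgeSet, ∃ e' : G.edgeSet, φ (Sum.inr e) = Sum.inr e') :=
  stmt_1_general G hn φ
end

section
/- Let G be a connected simple graph of order n ≥ 4 with maximum degree Δ(G). Then the distinguishing index of the central graph satisfies D'(C(G)) ≤ ⌈√Δ(G)⌉. -/
open SimpleGraph

/-!
For `n ≥ 4` the vertices of `G` have degree `n - 1 ≥ 3` in `C(G)` and the subdivision vertices
have degree `2`, so every automorphism of `C(G)` is induced by an automorphism `σ` of `G`. It
therefore suffices to colour the half-edges `u w_{uv}` and the edges `uv` of `C(G)` joining
non-adjacent vertices of `G` so that only `σ = id` preserves the colours.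

Fix a root `r` and layer `G` by the distance from `r`. Number the lower neighbours
`G.farNeighborSet r u` of each vertex `u` (there are at most `Δ ≤ d²` of them, `d = ⌈√Δ⌉`) and
write the number in base `d`, the high digit on the half-edge at `u` and the low digit on the
half-edge at the lower neighbour; edges inside a layer get `0`. A
colour-preserving `σ` fixing `r` preserves the layers, hence fixes every vertex by induction on the
distance. To fix `r`, colour `1` the edges of `C(G)` from `r` to its non-neighbours in `G`. If some
vertex has two non-neighbours, take it as `r`: `σ r ≠ r` would send both to `r`. Otherwise every
vertex other than `r` has at most one lower neighbour, all nonzero digits sit on edges at `r`, and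
the same argument applies to two neighbours of `r` carrying nonzero digits (those numbered `1` and
`d`), or to one of them and the non-neighbour of `r`.
-/

open Sum

section

lemma le_ceil_sqrt_mul_self (m : ℕ) : m ≤ ⌈√(m : ℝ)⌉₊ * ⌈√(m : ℝ)⌉₊ := by
  have h := Nat.le_ceil √(m : ℝ)
  have : (m : ℝ) ≤ ⌈√(m : ℝ)⌉₊ * ⌈√(m : ℝ)⌉₊ := by
    calc (m : ℝ) = √(m : ℝ) * √(m : ℝ) := (Real.mul_self_sqrt m.cast_nonneg).symm
      _ ≤ _ := mul_le_mul h h (Real.sqrt_nonneg _) (by positivity)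
  exact_mod_cast this

lemma two_le_ceil_sqrt {m : ℕ} (hm : 2 ≤ m) : 2 ≤ ⌈√(m : ℝ)⌉₊ := by
  have : ((1 : ℕ) : ℝ) < √(m : ℝ) := by
    rw [Real.lt_sqrt (by norm_num)]
    exact_mod_cast hm
  exact Nat.lt_ceil.mpr this

lemma ceil_sqrt_lt {m k : ℕ} (hmk : m ≤ k) (hk : 3 ≤ k) : ⌈√(m : ℝ)⌉₊ < k := by
  have hk' : (3 : ℝ) ≤ k := by exact_mod_cast hk
  have : √(m : ℝ) ≤ ((k - 1 : ℕ) : ℝ) := by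
    rw [Real.sqrt_le_left (by positivity), Nat.cast_sub (by omega)]
    have : (m : ℝ) ≤ k := by exact_mod_cast hmk
    push_cast
    nlinarith
  have := Nat.ceil_le.mpr this
  omega

variable {V : Type*}

open Classical in
noncomputable def rootMark (d : ℕ) [NeZero d] (r : V) (z : Sym2 V) : Fin d :=
  if r ∈ z then 1 else 0

namespace SimpleGraph

variable (G : SimpleGraph V)

lemma ncard_neighborSet_lt_card [Finite V] (v : V) : (G.neighborSet v).ncard < Nat.card V :=
  Set.ncard_lt_card fun h => G.irrefl (h ▸ Set.mem_univ v : v ∈ G.neighborSet v)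

lemma bddAbove_ncard_neighborSet [Finite V] :
    BddAbove {k | ∃ v : V, k = (G.neighborSet v).ncard} :=
  ⟨Nat.card V, by rintro _ ⟨w, rfl⟩; exact (G.ncard_neighborSet_lt_card w).le⟩

lemma card_sub_one_le_ncard_neighborSet_add_ncard_compl [Finite V] (v : V) :
    Nat.card V - 1 ≤ (G.neighborSet v).ncard + (Gᶜ.neighborSet v).ncard := by
  have := Set.ncard_union_le (G.neighborSet v) (Gᶜ.neighborSet v)
  rwa [neighborSet_union_compl_neighborSet_eq, Set.ncard_compl, Set.ncard_singleton] at this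

lemma ncard_neighborSet_le_maxDeg [Finite V] (v : V) : (G.neighborSet v).ncard ≤ maxDeg G :=
  le_csSup G.bddAbove_ncard_neighborSet ⟨v, rfl⟩

lemma maxDeg_lt_card [Finite V] [Nonempty V] : maxDeg G < Nat.card V := by
  obtain ⟨v, hv⟩ : maxDeg G ∈ {k | ∃ v : V, k = (G.neighborSet v).ncard} :=
    Nat.sSup_mem ⟨_, Classical.arbitrary V, rfl⟩ G.bddAbove_ncard_neighborSet
  exact hv ▸ G.ncard_neighborSet_lt_card v

variable {G}

lemma Connected.exists_adj_of_mem_of_notMem (hconn : G.Connected) {S : Set V} {x z : V}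
    (hx : x ∈ S) (hz : z ∉ S) : ∃ a ∈ S, ∃ b ∉ S, G.Adj a b := by
  obtain ⟨d, -, ha, hb⟩ := (hconn x z).some.exists_boundary_dart S hx hz
  exact ⟨_, ha, _, hb, d.adj⟩

lemma Connected.two_le_maxDeg [Finite V] (hconn : G.Connected) (hV : 2 < Nat.card V) :
    2 ≤ maxDeg G := by
  have : Nontrivial V := (Finite.one_lt_card_iff_nontrivial).mp (by omega)
  obtain ⟨x, z, hzx⟩ := exists_pair_ne V
  obtain ⟨a, rfl, y, -, hay⟩ :=
    hconn.exists_adj_of_mem_of_notMem (S := {x}) rfl (Ne.symm hzx : z ∉ ({x} : Set V))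
  have hpair : ({a, y} : Set V) ≠ Set.univ := fun h => by
    have := Set.ncard_insert_le a {y}
    rw [h, Set.ncard_univ, Set.ncard_singleton] at this
    omega
  obtain ⟨w, -, hw⟩ := Set.exists_of_ssubset (Set.ssubset_univ_iff.mpr hpair)
  obtain ⟨b, hb, c, hc, hbc⟩ := hconn.exists_adj_of_mem_of_notMem (Set.mem_insert a {y}) hw
  refine le_trans ?_ (G.ncard_neighborSet_le_maxDeg b)
  rw [Nat.succ_le_iff, Set.one_lt_ncard_iff]
  simp only [Set.mem_insert_iff, Set.mem_singleton_iff, not_or] at hb hc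
  rcases hb with rfl | rfl
  · exact ⟨y, c, hay, hbc, Ne.symm hc.2⟩
  · exact ⟨a, c, hay.symm, hbc, Ne.symm hc.1⟩

variable {V' : Type*} {G' : SimpleGraph V'}

lemma Hom.edist_le (f : G →g G') (a b : V) : G'.edist (f a) (f b) ≤ G.edist a b := by
  by_cases h : G.Reachable a b
  · obtain ⟨p, hp⟩ := h.exists_walk_length_eq_edist
    exact hp ▸ (SimpleGraph.edist_le (p.map f)).trans (by simp)
  · simp [edist_eq_top_of_not_reachable h]

lemma Iso.dist_eq (σ : G ≃g G') (a b : V) : G'.dist (σ a) (σ b) = G.dist a b := by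
  refine congrArg ENat.toNat (le_antisymm (σ.toHom.edist_le a b) ?_)
  simpa using σ.symm.toHom.edist_le (σ a) (σ b)

lemma Connected.exists_adj_dist_eq (hconn : G.Connected) {r v : V} {k : ℕ}
    (h : G.dist r v = k + 1) : ∃ u, G.Adj u v ∧ G.dist r u = k := by
  have hvr : v ≠ r := by rintro rfl; simp at h
  obtain ⟨p, hp⟩ := hconn.exists_walk_length_eq_dist v r
  obtain ⟨u, hvu, q, rfl⟩ := p.exists_eq_cons_of_ne hvr
  have hu : G.dist r u ≤ k := by
    have := dist_le q.reverse
    simp only [Walk.length_reverse] at this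
    simp only [Walk.length_cons, dist_comm, h] at hp
    omega
  refine ⟨u, hvu.symm, ?_⟩
  rcases hvu.symm.diff_dist_adj (u := r) with h' | h' | h' <;> omega

variable (G)

def farNeighborSet (r u : V) : Set V := {v | G.Adj u v ∧ G.dist r v = G.dist r u + 1}

variable {G}

lemma farNeighborSet_self (r : V) : G.farNeighborSet r r = G.neighborSet r := by
  ext v
  simp [farNeighborSet]

lemma notMem_farNeighborSet_of_mem {r u v : V} (h : v ∈ G.farNeighborSet r u) :
    u ∉ G.farNeighborSet r v := fun h' => by
  have := h.2; have := h'.2; omega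

lemma farNeighborSet_subset_compl_neighborSet (hconn : G.Connected) {r u : V} (hu : u ≠ r) :
    G.farNeighborSet r u ⊆ Gᶜ.neighborSet r := by
  rintro v ⟨-, hv⟩
  have := hconn.pos_dist_of_ne hu.symm
  refine ⟨?_, fun hrv => ?_⟩
  · rintro rfl
    simp at hv
  · rw [dist_eq_one_iff_adj.mpr hrv] at hv
    omega

theorem Iso.apply_eq_self_of_apply_root_eq {α : Type*} (hconn : G.Connected) (σ : G ≃g G)
    {r : V} (hr : σ r = r) (f : V → V → α) (hf : ∀ u v, G.Adj u v → f (σ u) (σ v) = f u v)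
    (hinj : ∀ u, ∀ v ∈ G.farNeighborSet r u, ∀ w ∈ G.farNeighborSet r u,
      f u v = f u w → f v u = f w u → v = w) (v : V) : σ v = v := by
  obtain ⟨k, hk⟩ : ∃ k, G.dist r v = k := ⟨_, rfl⟩
  induction k generalizing v with
  | zero => rw [← hconn.dist_eq_zero_iff.mp hk, hr]
  | succ k ih =>
    obtain ⟨u, huv, hu⟩ := hconn.exists_adj_dist_eq hk
    have hσu := ih u hu
    have hv : v ∈ G.farNeighborSet r u := ⟨huv, by rw [hk, hu]⟩
    have hσv : σ v ∈ G.farNeighborSet r u := by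
      refine ⟨hσu ▸ σ.map_adj_iff.mpr huv, ?_⟩
      rw [← hr, σ.dist_eq, hr, hv.2]
    refine hinj u (σ v) hσv v hv ?_ ?_
    · simpa [hσu] using hf u v huv
    · simpa [hσu] using hf v u huv.symm

section Finite

variable [Finite V] (G)

open Classical in
noncomputable def farIndex (r u v : V) : ℕ :=
  if h : v ∈ G.farNeighborSet r u then Finite.equivFin (G.farNeighborSet r u) ⟨v, h⟩ else 0

variable {G}

lemma farIndex_lt {r u v : V} (h : v ∈ G.farNeighborSet r u) :
    G.farIndex r u v < Nat.card (G.farNeighborSet r u) := by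
  simp [farIndex, h]

lemma farIndex_injOn (r u : V) : Set.InjOn (G.farIndex r u) (G.farNeighborSet r u) := by
  intro v hv w hw h
  simp only [farIndex, hv, hw, dif_pos, Fin.val_inj] at h
  exact congrArg Subtype.val ((Finite.equivFin _).injective h)

lemma exists_farIndex_eq {r u : V} {k : ℕ} (hk : k < Nat.card (G.farNeighborSet r u)) :
    ∃ v ∈ G.farNeighborSet r u, G.farIndex r u v = k := by
  obtain ⟨⟨v, hv⟩, hvk⟩ := (Finite.equivFin (G.farNeighborSet r u)).surjective ⟨k, hk⟩
  exact ⟨v, hv, by simp only [farIndex, hv, dif_pos, hvk]⟩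

variable (G) (d : ℕ) [NeZero d]

open Classical in
noncomputable def bfsColoring (r x y : V) : Fin d :=
  if y ∈ G.farNeighborSet r x then Fin.ofNat d (G.farIndex r x y / d)
  else if x ∈ G.farNeighborSet r y then Fin.ofNat d (G.farIndex r y x) else 0

variable {G d}

lemma bfsColoring_upper_of_mem {r u v : V} (h : v ∈ G.farNeighborSet r u) :
    G.bfsColoring d r u v = Fin.ofNat d (G.farIndex r u v / d) := by
  simp [bfsColoring, h]

lemma bfsColoring_lower_of_mem {r u v : V} (h : v ∈ G.farNeighborSet r u) :
    G.bfsColoring d r v u = Fin.ofNat d (G.farIndex r u v) := by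
  simp [bfsColoring, h, notMem_farNeighborSet_of_mem h]

lemma bfsColoring_injOn {r u v w : V} (hcard : Nat.card (G.farNeighborSet r u) ≤ d * d)
    (hv : v ∈ G.farNeighborSet r u) (hw : w ∈ G.farNeighborSet r u)
    (hhigh : G.bfsColoring d r u v = G.bfsColoring d r u w)
    (hlow : G.bfsColoring d r v u = G.bfsColoring d r w u) : v = w := by
  rw [bfsColoring_upper_of_mem hv, bfsColoring_upper_of_mem hw] at hhigh
  rw [bfsColoring_lower_of_mem hv, bfsColoring_lower_of_mem hw] at hlow
  have hdigit : ∀ x ∈ G.farNeighborSet r u, G.farIndex r u x / d < d := fun x hx =>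
    Nat.div_lt_of_lt_mul ((farIndex_lt hx).trans_le hcard)
  have h1 := congrArg Fin.val hhigh
  have h2 := congrArg Fin.val hlow
  simp only [Fin.val_ofNat, Nat.mod_eq_of_lt (hdigit v hv), Nat.mod_eq_of_lt (hdigit w hw)] at h1 h2
  refine farIndex_injOn r u hv hw ?_
  rw [← Nat.div_add_mod (G.farIndex r u v) d, ← Nat.div_add_mod (G.farIndex r u w) d, h1, h2]

lemma one_lt_card_of_bfsColoring_ne_zero {r x y : V} (h : G.bfsColoring d r x y ≠ 0) :
    1 < Nat.card (G.farNeighborSet r x) ∨ 1 < Nat.card (G.farNeighborSet r y) := by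
  by_cases hy : y ∈ G.farNeighborSet r x
  · rw [bfsColoring_upper_of_mem hy] at h
    have : d ≤ G.farIndex r x y := by
      by_contra! hlt
      simp [Nat.div_eq_of_lt hlt] at h
    exact Or.inl (by have := farIndex_lt hy; omega)
  by_cases hx : x ∈ G.farNeighborSet r y
  · rw [bfsColoring_lower_of_mem hx] at h
    have : G.farIndex r y x ≠ 0 := by rintro h0; simp [h0] at h
    exact Or.inr (by have := farIndex_lt hx; omega)
  simp [bfsColoring, hx, hy] at h

end Finite

variable {d : ℕ} [NeZero d]

lemma Iso.apply_eq_of_mem_compl_neighborSet (hd : 1 < d) {σ : G ≃g G} {r y : V}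
    (hg : ∀ u v, u ≠ v → ¬G.Adj u v → rootMark d r s(σ u, σ v) = rootMark d r s(u, v))
    (hσ : σ r ≠ r) (hy : y ∈ Gᶜ.neighborSet r) : σ y = r := by
  have h := hg r y hy.1 hy.2
  have hmem : r ∈ s(σ r, σ y) := by
    by_contra hr
    simp [rootMark, hr, Fin.ext_iff, Nat.mod_eq_of_lt hd] at h
  rcases Sym2.mem_iff.mp hmem with h' | h'
  · exact absurd h'.symm hσ
  · exact h'.symm

lemma Iso.apply_eq_of_ne_zero {α : Type*} [Zero α] {σ : G ≃g G} {r y : V} {f : V → V → α}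
    (hf : ∀ u v, G.Adj u v → f (σ u) (σ v) = f u v) (hsupp : ∀ x y, f x y ≠ 0 → x = r ∨ y = r)
    (hσ : σ r ≠ r) (hy : G.Adj r y) (hfy : f r y ≠ 0 ∨ f y r ≠ 0) : σ y = r := by
  rcases hfy with h | h
  · rw [← hf r y hy] at h
    exact (hsupp _ _ h).resolve_left hσ
  · rw [← hf y r hy.symm] at h
    exact (hsupp _ _ h).resolve_right hσ

lemma Iso.apply_eq_self_of_nontrivial (hd : 1 < d) {σ : G ≃g G} {r : V}
    (hg : ∀ u v, u ≠ v → ¬G.Adj u v → rootMark d r s(σ u, σ v) = rootMark d r s(u, v))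
    (h : (Gᶜ.neighborSet r).Nontrivial) : σ r = r := by
  by_contra hσ
  obtain ⟨y₁, h₁, y₂, h₂, hne⟩ := h
  exact hne (σ.injective ((σ.apply_eq_of_mem_compl_neighborSet hd hg hσ h₁).trans
    (σ.apply_eq_of_mem_compl_neighborSet hd hg hσ h₂).symm))

variable [Finite V]

lemma eq_or_eq_of_bfsColoring_ne_zero (hconn : G.Connected) {r x y : V}
    (hsub : (Gᶜ.neighborSet r).Subsingleton) (h : G.bfsColoring d r x y ≠ 0) : x = r ∨ y = r := by
  have hsmall : ∀ u, u ≠ r → Nat.card (G.farNeighborSet r u) ≤ 1 := fun u hu => by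
    rw [Nat.card_coe_set_eq, Set.ncard_le_one_iff_subsingleton]
    exact hsub.anti (farNeighborSet_subset_compl_neighborSet hconn hu)
  by_contra! hxy
  rcases one_lt_card_of_bfsColoring_ne_zero h with h' | h'
  · exact (hsmall x hxy.1).not_gt h'
  · exact (hsmall y hxy.2).not_gt h'

lemma Iso.apply_eq_self_of_subsingleton (hconn : G.Connected) (hd : 1 < d)
    (hdn : d + 2 ≤ Nat.card V) {σ : G ≃g G} {r : V} (hsub : (Gᶜ.neighborSet r).Subsingleton)
    (hf : ∀ u v, G.Adj u v → G.bfsColoring d r (σ u) (σ v) = G.bfsColoring d r u v)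
    (hg : ∀ u v, u ≠ v → ¬G.Adj u v → rootMark d r s(σ u, σ v) = rootMark d r s(u, v)) :
    σ r = r := by
  by_contra hσ
  have hcard : Nat.card V - 1 ≤ Nat.card (G.farNeighborSet r r) + (Gᶜ.neighborSet r).ncard := by
    rw [farNeighborSet_self, Nat.card_coe_set_eq]
    exact G.card_sub_one_le_ncard_neighborSet_add_ncard_compl r
  -- all nonzero digits sit on edges at `r`, so a neighbour of `r` carrying one is sent to `r`
  have marker : ∀ k < Nat.card (G.farNeighborSet r r), k / d % d ≠ 0 ∨ k % d ≠ 0 →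
      ∃ v, G.Adj r v ∧ G.farIndex r r v = k ∧ σ v = r := by
    intro k hk hdigit
    obtain ⟨v, hv, rfl⟩ := exists_farIndex_eq hk
    refine ⟨v, hv.1, rfl, σ.apply_eq_of_ne_zero hf
      (fun _ _ => eq_or_eq_of_bfsColoring_ne_zero hconn hsub) hσ hv.1 ?_⟩
    rw [bfsColoring_upper_of_mem hv, bfsColoring_lower_of_mem hv]
    simpa [Fin.ext_iff] using hdigit
  have hone : 1 % d ≠ 0 := by rw [Nat.mod_eq_of_lt hd]; exact one_ne_zero
  rcases hsub.eq_empty_or_singleton with h | ⟨r', h⟩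
  · rw [h, Set.ncard_empty] at hcard
    obtain ⟨v, -, hv, hσv⟩ := marker 1 (by omega) (Or.inr hone)
    obtain ⟨w, -, hw, hσw⟩ := marker d (by omega) (Or.inl (by rwa [Nat.div_self (by omega)]))
    have := σ.injective (hσv.trans hσw.symm)
    subst this
    omega
  · rw [h, Set.ncard_singleton] at hcard
    have hr' : r' ∈ Gᶜ.neighborSet r := h ▸ rfl
    obtain ⟨v, hv, -, hσv⟩ := marker 1 (by omega) (Or.inr hone)
    have := σ.injective (hσv.trans (σ.apply_eq_of_mem_compl_neighborSet hd hg hσ hr').symm)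
    exact hr'.2 (this ▸ hv)

theorem exists_root_apply_eq_self (hconn : G.Connected) (hd : 1 < d) (hdn : d + 2 ≤ Nat.card V) :
    ∃ r, ∀ σ : G ≃g G,
      (∀ u v, G.Adj u v → G.bfsColoring d r (σ u) (σ v) = G.bfsColoring d r u v) →
      (∀ u v, u ≠ v → ¬G.Adj u v → rootMark d r s(σ u, σ v) = rootMark d r s(u, v)) →
      σ r = r := by
  by_cases h : ∃ r, (Gᶜ.neighborSet r).Nontrivial
  · obtain ⟨r, hr⟩ := h
    exact ⟨r, fun σ _ hg => σ.apply_eq_self_of_nontrivial hd hg hr⟩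
  · simp only [not_exists, Set.not_nontrivial_iff] at h
    have : Nonempty V := hconn.nonempty
    exact ⟨Classical.arbitrary V, fun σ hf hg =>
      σ.apply_eq_self_of_subsingleton hconn hd hdn (h _) hf hg⟩

end SimpleGraph

section CentralGraph

variable {G : SimpleGraph V}

lemma ncard_neighborSet_centralGraph_inr_le_two (e : G.edgeSet) :
    ((centralGraph G).neighborSet (inr e)).ncard ≤ 2 := by
  obtain ⟨e, he⟩ := e
  induction e using Sym2.ind with | h x y => ?_
  calc _ ≤ ({inl x, inl y} : Set (V ⊕ G.edgeSet)).ncard := by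
        refine Set.ncard_le_ncard ?_ (Set.toFinite _)
        rintro (w | f) h
        · rcases Sym2.mem_iff.mp h with rfl | rfl <;> simp
        · exact h.elim
    _ ≤ 2 := (Set.ncard_insert_le _ _).trans (by simp)

lemma card_sub_one_le_ncard_neighborSet_centralGraph_inl [Finite V] (u : V) :
    Nat.card V - 1 ≤ ((centralGraph G).neighborSet (inl u)).ncard := by
  classical
  let N : V → V ⊕ G.edgeSet := fun w => if h : G.Adj u w then inr ⟨s(u, w), h⟩ else inl w
  calc Nat.card V - 1 = ({u}ᶜ : Set V).ncard := by rw [Set.ncard_compl, Set.ncard_singleton]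
    _ ≤ _ := by
      refine Set.ncard_le_ncard_of_injOn N (fun w hw => ?_) (fun w _ w' _ h => ?_)
      · simp only [N]
        split_ifs with h
        · exact Sym2.mem_mk_left u w
        · exact ⟨Ne.symm hw, h⟩
      · simp only [N] at h
        split_ifs at h
        · exact Sym2.congr_right.mp (congrArg Subtype.val (inr_injective h))
        · exact inl_injective h

lemma exists_centralGraph_iso_apply_inl [Finite V] (hn : 4 ≤ Nat.card V)
    (φ : centralGraph G ≃g centralGraph G) (u : V) : ∃ v, φ (inl u) = inl v := by
  rcases hφ : φ (inl u) with v | e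
  · exact ⟨v, rfl⟩
  · have h := Nat.card_congr (φ.mapNeighborSet (inl u))
    rw [Nat.card_coe_set_eq, Nat.card_coe_set_eq, hφ] at h
    have := card_sub_one_le_ncard_neighborSet_centralGraph_inl (G := G) u
    have := ncard_neighborSet_centralGraph_inr_le_two e
    omega

lemma exists_iso_of_centralGraph_iso [Finite V] (hn : 4 ≤ Nat.card V)
    (φ : centralGraph G ≃g centralGraph G) : ∃ σ : G ≃g G, ∀ u, φ (inl u) = inl (σ u) := by
  choose σ hσ using exists_centralGraph_iso_apply_inl hn φ
  have hinj : Function.Injective σ := fun u v h =>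
    inl_injective (φ.injective ((hσ u).trans (h ▸ (hσ v).symm)))
  refine ⟨⟨Equiv.ofBijective σ (Finite.injective_iff_bijective.mp hinj), fun {u v} => ?_⟩, hσ⟩
  have h : σ u ≠ σ v ∧ ¬G.Adj (σ u) (σ v) ↔ u ≠ v ∧ ¬G.Adj u v := by
    change (centralGraph G).Adj (inl (σ u)) (inl (σ v)) ↔ (centralGraph G).Adj (inl u) (inl v)
    rw [← hσ, ← hσ]
    exact φ.map_rel_iff
  rcases eq_or_ne u v with rfl | huv
  · simp
  · simpa [huv, hinj.ne huv, not_iff_not] using h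

lemma centralGraph_iso_apply_inr {φ : centralGraph G ≃g centralGraph G} {σ : G ≃g G}
    (hσ : ∀ u, φ (inl u) = inl (σ u)) (e : G.edgeSet) : φ (inr e) = inr (σ.mapEdgeSet e) := by
  obtain ⟨e, he⟩ := e
  induction e using Sym2.ind with | h x y => ?_
  have hx : (centralGraph G).Adj (φ (inl x)) (φ (inr ⟨_, he⟩)) :=
    φ.map_rel_iff.mpr (Sym2.mem_mk_left x y)
  have hy : (centralGraph G).Adj (φ (inl y)) (φ (inr ⟨_, he⟩)) :=
    φ.map_rel_iff.mpr (Sym2.mem_mk_right x y)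
  rw [hσ] at hx hy
  rcases hφ : φ (inr ⟨s(x, y), he⟩) with w | e'
  · have := φ.injective (hφ.trans (σ.apply_symm_apply w ▸ hσ (σ.symm w)).symm)
    simp at this
  · rw [hφ] at hx hy
    congr 1
    ext1
    simpa using (Sym2.mem_and_mem_iff (σ.injective.ne (G.ne_of_adj he))).mp ⟨hx, hy⟩

variable {d : ℕ} [NeZero d]

open Classical in
noncomputable def halfEdgeColor (f : V → V → Fin d) (u : V) (e : G.edgeSet) : Fin d :=
  if h : u ∈ (e : Sym2 V) then f u (Sym2.Mem.other h) else 0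

lemma halfEdgeColor_mk (f : V → V → Fin d) {u v : V} (h : G.Adj u v) :
    halfEdgeColor f u ⟨s(u, v), h⟩ = f u v := by
  have hu : u ∈ s(u, v) := Sym2.mem_mk_left u v
  simp only [halfEdgeColor, hu, dif_pos]
  rw [Sym2.congr_right.mp (Sym2.other_spec hu)]

/-- `f u v` colours the edge of `C(G)` between `u` and the subdivision vertex of `uv`. -/
noncomputable def centralColor (f : V → V → Fin d) (g : Sym2 V → Fin d) :
    V ⊕ G.edgeSet → V ⊕ G.edgeSet → Fin d
  | inl u, inl v => g s(u, v)
  | inl u, inr e => halfEdgeColor f u e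
  | inr e, inl u => halfEdgeColor f u e
  | inr _, inr _ => 0

lemma centralColor_comm (f : V → V → Fin d) (g : Sym2 V → Fin d) (x y : V ⊕ G.edgeSet) :
    centralColor f g x y = centralColor f g y x := by
  rcases x with u | e <;> rcases y with v | e' <;> simp [centralColor, Sym2.eq_swap]

theorem distinguishingIndex_centralGraph_le [Finite V] (hn : 4 ≤ Nat.card V)
    (f : V → V → Fin d) (g : Sym2 V → Fin d)
    (hrigid : ∀ σ : G ≃g G, (∀ u v, G.Adj u v → f (σ u) (σ v) = f u v) →
      (∀ u v, u ≠ v → ¬G.Adj u v → g s(σ u, σ v) = g s(u, v)) → ∀ v, σ v = v) :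
    distinguishingIndex (centralGraph G) ≤ d := by
  refine Nat.sInf_le ⟨fun e => Sym2.lift ⟨centralColor f g, centralColor_comm f g⟩ e.1,
    fun φ hφ => ?_⟩
  obtain ⟨σ, hσ⟩ := exists_iso_of_centralGraph_iso hn φ
  have hcol : ∀ x y, (centralGraph G).Adj x y →
      centralColor f g (φ x) (φ y) = centralColor f g x y := fun x y h => by
    simpa using hφ ⟨s(x, y), h⟩
  have hid : ∀ v, σ v = v := by
    refine hrigid σ (fun u v huv => ?_) (fun u v huv hnadj => ?_)
    · have := hcol (inl u) (inr ⟨s(u, v), huv⟩) (Sym2.mem_mk_left u v)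
      have hmap : σ.mapEdgeSet ⟨s(u, v), huv⟩ = ⟨s(σ u, σ v), σ.map_adj_iff.mpr huv⟩ := rfl
      rwa [hσ, centralGraph_iso_apply_inr hσ, hmap, centralColor, centralColor, halfEdgeColor_mk,
        halfEdgeColor_mk] at this
    · simpa [hσ, centralColor] using hcol (inl u) (inl v) ⟨huv, hnadj⟩
  rintro (u | e)
  · rw [hσ, hid]
  · rw [centralGraph_iso_apply_inr hσ]
    congr 1
    ext1
    simp [hid]

end CentralGraph

theorem distinguishingIndex_centralGraph_le_of_maxDeg_le_mul_self [Finite V] {G : SimpleGraph V}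
    (hconn : G.Connected) (hn : 4 ≤ Nat.card V) {d : ℕ} (hd : 1 < d)
    (hΔ : maxDeg G ≤ d * d) (hdn : d + 2 ≤ Nat.card V) :
    distinguishingIndex (centralGraph G) ≤ d := by
  have : NeZero d := ⟨by omega⟩
  obtain ⟨r, hr⟩ := SimpleGraph.exists_root_apply_eq_self hconn hd hdn
  refine distinguishingIndex_centralGraph_le hn (G.bfsColoring d r) (rootMark d r)
    fun σ hf hg => σ.apply_eq_self_of_apply_root_eq hconn (hr σ hf hg) _ hf
      fun u v hv w hw => SimpleGraph.bfsColoring_injOn ?_ hv hw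
  rw [Nat.card_coe_set_eq]
  exact (Set.ncard_le_ncard (fun v hv => hv.1)).trans ((G.ncard_neighborSet_le_maxDeg u).trans hΔ)

end

/-- For a connected graph `G` of order at least `4`,
`D'(C(G)) ≤ ⌈√Δ(G)⌉`. -/
theorem stmt_6 {V : Type*} [Fintype V] (G : SimpleGraph V)
    (hconn : G.Connected) (hn : 4 ≤ Fintype.card V) :
    distinguishingIndex (centralGraph G) ≤ ⌈Real.sqrt (maxDeg G)⌉₊ := by
  rw [← Nat.card_eq_fintype_card] at hn
  have : Nonempty V := hconn.nonempty
  have hΔ := G.maxDeg_lt_card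
  refine distinguishingIndex_centralGraph_le_of_maxDeg_le_mul_self hconn hn
    (two_le_ceil_sqrt (hconn.two_le_maxDeg (by omega))) (le_ceil_sqrt_mul_self _) ?_
  have := ceil_sqrt_lt (k := Nat.card V - 1) (by omega : maxDeg G ≤ _) (by omega)
  omega
end
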